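/- A Gibbs state is completely passive: for every n ≥ 1, the n-fold tensor product ⊗^n ω_β is passive with respect to the sum Hamiltonian H^(n) = Σ_{j=1}^n H_j, i.e., tr((⊗^n ω_β) H^(n)) ≤ tr(U(⊗^n ω_β)U† H^(n)) for every unitary U on the n-fold tensor product space. -/

import Mathlib

/-!
Diagonalise `H = V diag(λ) V†`. Then `V ⊗ ⋯ ⊗ V` diagonalises both `H^(n)`, with eigenvalues
`∑ₘ λ(iₘ)`, and `⊗ⁿ ω_β`, with eigenvalues `∏ₘ e^{-βλ(iₘ)} / Z`; since the partition function of
`H^(n)` is `Zⁿ`, `⊗ⁿ ω_β` is the Gibbs state of `H^(n)`, and it suffices that every Gibbs state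
is passive. In an eigenbasis of the Hamiltonian, with energies `Λ` and Boltzmann weights `q`, the
energy of `U ω U†` is `∑ᵢⱼ |Uᵢⱼ|² qⱼ Λᵢ`. The matrix `(|Uᵢⱼ|²)` is doubly stochastic, hence by
Birkhoff's theorem a convex combination of permutation matrices, and for each permutation the
rearrangement inequality applies because `q` decreases as `Λ` increases.
-/

open Matrix BigOperators
open scoped Classical ComplexOrder

noncomputable section

def energy {ι : Type*} [Fintype ι] (H ρ : Matrix ι ι ℂ) : ℝ :=
  (Matrix.trace (ρ * H)).re

def IsDensity {ι : Type*} [Fintype ι] [DecidableEq ι] (ρ : Matrix ι ι ℂ) : Prop :=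
  ρ.PosSemidef ∧ ρ.trace = 1

def IsPassive {ι : Type*} [Fintype ι] [DecidableEq ι] (H σ : Matrix ι ι ℂ) : Prop :=
  ∀ U ∈ Matrix.unitaryGroup ι ℂ, energy H σ ≤ energy H (U * σ * star U)

def vnEntropy {ι : Type*} [Fintype ι] [DecidableEq ι] (ρ : Matrix ι ι ℂ) : ℝ :=
  if h : ρ.IsHermitian then ∑ i, Real.negMulLog (h.eigenvalues i) else 0

def gibbs {ι : Type*} [Fintype ι] [DecidableEq ι] (H : Matrix ι ι ℂ) (β : ℝ) :
    Matrix ι ι ℂ :=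
  (Matrix.trace (NormedSpace.exp ((-β : ℂ) • H)))⁻¹ • NormedSpace.exp ((-β : ℂ) • H)

def tensPow {d : ℕ} (n : ℕ) (ρ : Matrix (Fin d) (Fin d) ℂ) :
    Matrix (Fin n → Fin d) (Fin n → Fin d) ℂ :=
  Matrix.of fun i j => ∏ m, ρ (i m) (j m)

def sumHam {d : ℕ} (n : ℕ) (H : Matrix (Fin d) (Fin d) ℂ) :
    Matrix (Fin n → Fin d) (Fin n → Fin d) ℂ :=
  Matrix.of fun i j => ∑ m, H (i m) (j m) * ∏ l ∈ Finset.univ.erase m, (if i l = j l then (1:ℂ) else 0)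


section PiKron

variable {κ ι R : Type*} [Fintype κ]

def piKron [CommSemiring R] (A : κ → Matrix ι ι R) : Matrix (κ → ι) (κ → ι) R :=
  Matrix.of fun i j => ∏ m, A m (i m) (j m)

theorem piKron_mul [Fintype ι] [CommSemiring R] [DecidableEq κ] (A B : κ → Matrix ι ι R) :
    piKron A * piKron B = piKron fun m => A m * B m := by
  ext i j
  simp only [piKron, mul_apply, of_apply, Finset.prod_mul_distrib.symm]
  exact (Fintype.prod_sum fun m a => A m (i m) a * B m a (j m)).symm

theorem piKron_diagonal [CommSemiring R] [DecidableEq ι] (f : κ → ι → R) :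
    piKron (fun m => diagonal (f m)) = diagonal fun i => ∏ m, f m (i m) := by
  ext i j
  by_cases h : i = j
  · simp [piKron, h]
  · obtain ⟨m, hm⟩ := Function.ne_iff.mp h
    simpa [piKron, h] using Finset.prod_eq_zero (Finset.mem_univ m) (diagonal_apply_ne (f m) hm)

theorem piKron_one [CommSemiring R] [DecidableEq ι] :
    piKron (fun _ : κ => (1 : Matrix ι ι R)) = 1 := by
  simpa using piKron_diagonal (κ := κ) fun _ _ => (1 : R)

theorem star_piKron [CommSemiring R] [StarRing R] (A : κ → Matrix ι ι R) :
    star (piKron A) = piKron fun m => star (A m) := by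
  ext i j
  simp [piKron, star_apply, star_prod]

theorem piKron_mem_unitaryGroup [Fintype ι] [CommRing R] [StarRing R] [DecidableEq κ]
    [DecidableEq ι] {A : κ → Matrix ι ι R} (hA : ∀ m, A m ∈ unitaryGroup ι R) :
    piKron A ∈ unitaryGroup (κ → ι) R := by
  rw [mem_unitaryGroup_iff, star_piKron, piKron_mul]
  simp_rw [mem_unitaryGroup_iff.mp (hA _)]
  exact piKron_one

theorem piKron_mulSingle_diagonal [CommSemiring R] [DecidableEq κ] [DecidableEq ι] (m : κ)
    (f : ι → R) : piKron (Pi.mulSingle m (diagonal f)) = diagonal fun i => f (i m) := by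
  have : Pi.mulSingle m (diagonal f) = fun l => diagonal ((Pi.mulSingle m f : κ → ι → R) l) := by
    ext1 l
    rcases eq_or_ne l m with rfl | hl <;> simp [*]
  rw [this, piKron_diagonal]
  congr 1; ext i
  rw [Fintype.prod_eq_single m fun l hl => by simp [Pi.mulSingle_eq_of_ne hl], Pi.mulSingle_eq_same]

theorem piKron_mulSingle_conj [Fintype ι] [CommSemiring R] [StarRing R] [DecidableEq κ]
    [DecidableEq ι] (m : κ) {U : Matrix ι ι R} (hU : U * star U = 1) (A : Matrix ι ι R) :
    piKron (Pi.mulSingle m (U * A * star U)) =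
      piKron (fun _ => U) * piKron (Pi.mulSingle m A) * star (piKron fun _ => U) := by
  have : Pi.mulSingle m (U * A * star U) =
      fun l => U * (Pi.mulSingle m A : κ → Matrix ι ι R) l * star U := by
    ext1 l
    rcases eq_or_ne l m with rfl | hl <;> simp [*]
  rw [this, star_piKron, piKron_mul, piKron_mul]

end PiKron

section TensorPower

variable {d n : ℕ}

theorem tensPow_eq_piKron (A : Matrix (Fin d) (Fin d) ℂ) : tensPow n A = piKron fun _ => A := rfl

theorem tensPow_mem_unitaryGroup {U : Matrix (Fin d) (Fin d) ℂ} (hU : U ∈ unitaryGroup (Fin d) ℂ) :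
    tensPow n U ∈ unitaryGroup (Fin n → Fin d) ℂ :=
  piKron_mem_unitaryGroup fun _ => hU

theorem tensPow_conj_diagonal (U : Matrix (Fin d) (Fin d) ℂ) (f : Fin d → ℂ) :
    tensPow n (U * diagonal f * star U) =
      tensPow n U * diagonal (fun i => ∏ m, f (i m)) * star (tensPow n U) := by
  rw [tensPow_eq_piKron, tensPow_eq_piKron, star_piKron, ← piKron_diagonal, piKron_mul, piKron_mul]

theorem sumHam_eq_sum_piKron (H : Matrix (Fin d) (Fin d) ℂ) :
    sumHam n H = ∑ m, piKron (Pi.mulSingle m H) := by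
  ext i j
  simp only [sumHam, piKron, of_apply, Matrix.sum_apply]
  refine Finset.sum_congr rfl fun m _ => ?_
  rw [← Finset.mul_prod_erase _ _ (Finset.mem_univ m), Pi.mulSingle_eq_same]
  congr 1
  refine Finset.prod_congr rfl fun l hl => ?_
  rw [Pi.mulSingle_eq_of_ne (Finset.ne_of_mem_erase hl), one_apply]

theorem sumHam_conj_diagonal {U : Matrix (Fin d) (Fin d) ℂ} (hU : U ∈ unitaryGroup (Fin d) ℂ)
    (f : Fin d → ℂ) :
    sumHam n (U * diagonal f * star U) =
      tensPow n U * diagonal (fun i => ∑ m, f (i m)) * star (tensPow n U) := by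
  simp only [sumHam_eq_sum_piKron, piKron_mulSingle_conj _ (mem_unitaryGroup_iff.mp hU),
    piKron_mulSingle_diagonal, ← Finset.sum_mul, ← Finset.mul_sum, tensPow_eq_piKron]
  congr
  ext i j
  by_cases h : i = j <;> simp [h, Matrix.sum_apply]

theorem isHermitian_sumHam {H : Matrix (Fin d) (Fin d) ℂ} (hH : H.IsHermitian) :
    (sumHam n H).IsHermitian := by
  rw [isHermitian_iff_isSelfAdjoint, sumHam_eq_sum_piKron]
  refine isSelfAdjoint_sum _ fun m _ => ?_
  rw [IsSelfAdjoint, star_piKron]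
  congr 1
  ext1 l
  rw [← Pi.star_apply, Pi.star_mulSingle, isHermitian_iff_isSelfAdjoint.mp hH]

end TensorPower

section Gibbs

variable {ι : Type*} [Fintype ι]

def gibbsWeights (β : ℝ) (Λ : ι → ℝ) (i : ι) : ℝ :=
  Real.exp (-β * Λ i) / ∑ j, Real.exp (-β * Λ j)

theorem antivary_gibbsWeights {β : ℝ} (hβ : 0 ≤ β) (Λ : ι → ℝ) :
    Antivary (gibbsWeights β Λ) Λ := by
  intro i j hij
  exact div_le_div_of_nonneg_right (Real.exp_le_exp.mpr (by nlinarith))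
    (Finset.sum_nonneg fun _ _ => (Real.exp_pos _).le)

theorem gibbsWeights_pi_sum {κ : Type*} [Fintype κ] [DecidableEq κ] (β : ℝ) (Λ : ι → ℝ)
    (i : κ → ι) : gibbsWeights β (fun j => ∑ m, Λ (j m)) i = ∏ m, gibbsWeights β Λ (i m) := by
  simp only [gibbsWeights, Finset.prod_div_distrib, Fintype.prod_sum, ← Real.exp_sum,
    Finset.mul_sum]

theorem exp_unitary_conj [DecidableEq ι] {U : Matrix ι ι ℂ} (hU : U ∈ unitaryGroup ι ℂ)
    (A : Matrix ι ι ℂ) : NormedSpace.exp (U * A * star U) = U * NormedSpace.exp A * star U :=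
  Matrix.exp_units_conj (Unitary.toUnits ⟨U, hU⟩) A

theorem gibbs_conj_diagonal [DecidableEq ι] {U : Matrix ι ι ℂ} (hU : U ∈ unitaryGroup ι ℂ)
    (β : ℝ) (Λ : ι → ℝ) :
    gibbs (U * diagonal (fun i => (Λ i : ℂ)) * star U) β =
      U * diagonal (fun i => (gibbsWeights β Λ i : ℂ)) * star U := by
  have hexp : NormedSpace.exp ((-β : ℂ) • (U * diagonal (fun i => (Λ i : ℂ)) * star U)) =
      U * diagonal (fun i => (Real.exp (-β * Λ i) : ℂ)) * star U := by
    rw [← Matrix.smul_mul, ← Matrix.mul_smul, ← diagonal_smul, exp_unitary_conj hU, exp_diagonal]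
    congr
    ext i
    simp [← Complex.exp_eq_exp_ℂ, Complex.ofReal_exp]
  have htrace : trace (NormedSpace.exp ((-β : ℂ) • (U * diagonal (fun i => (Λ i : ℂ)) * star U))) =
      ((∑ j, Real.exp (-β * Λ j) : ℝ) : ℂ) := by
    rw [hexp, trace_mul_cycle, mem_unitaryGroup_iff'.mp hU, one_mul, trace_diagonal]
    push_cast; rfl
  rw [gibbs, htrace, hexp, ← Matrix.smul_mul, ← Matrix.mul_smul, ← diagonal_smul]
  congr
  ext i
  simp [gibbsWeights, div_eq_inv_mul]

end Gibbs

section Passivity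

variable {ι : Type*} [Fintype ι] [DecidableEq ι]

theorem energy_unitary_conj {W : Matrix ι ι ℂ} (hW : W ∈ unitaryGroup ι ℂ) (K ρ : Matrix ι ι ℂ) :
    energy (W * K * star W) (W * ρ * star W) = energy K ρ := by
  have hWW : star W * W = 1 := mem_unitaryGroup_iff'.mp hW
  unfold energy
  congr 1
  calc trace (W * ρ * star W * (W * K * star W)) = trace (W * (ρ * K) * star W) := by
        simp only [← Matrix.mul_assoc, Matrix.mul_assoc _ (star W) W, hWW, Matrix.mul_one]
    _ = trace (ρ * K) := by rw [trace_mul_cycle, hWW, Matrix.one_mul]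

theorem IsPassive.unitary_conj {K σ W : Matrix ι ι ℂ} (h : IsPassive K σ)
    (hW : W ∈ unitaryGroup ι ℂ) : IsPassive (W * K * star W) (W * σ * star W) := by
  intro U hU
  have hWW : W * star W = 1 := mem_unitaryGroup_iff.mp hW
  have hconj : U * (W * σ * star W) * star U =
      W * ((star W * U * W) * σ * star (star W * U * W)) * star W := by
    simp only [StarMul.star_mul, star_star, ← Matrix.mul_assoc, hWW, Matrix.one_mul]
    simp only [Matrix.mul_assoc, hWW, Matrix.mul_one]
  rw [hconj, energy_unitary_conj hW, energy_unitary_conj hW]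
  exact h _ (mul_mem (mul_mem (Unitary.star_mem hW) hU) hW)

def unistochastic (U : Matrix ι ι ℂ) : Matrix ι ι ℝ :=
  of fun i j => Complex.normSq (U i j)

theorem unistochastic_mem_doublyStochastic {U : Matrix ι ι ℂ} (hU : U ∈ unitaryGroup ι ℂ) :
    unistochastic U ∈ doublyStochastic ℝ ι := by
  refine mem_doublyStochastic_iff_sum.mpr
    ⟨fun i j => Complex.normSq_nonneg _, fun i => ?_, fun j => ?_⟩
  · have := congr_arg (fun M => (M i i).re) (mem_unitaryGroup_iff.mp hU)
    simpa [mul_apply, Complex.mul_conj, unistochastic] using this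
  · have := congr_arg (fun M => (M j j).re) (mem_unitaryGroup_iff'.mp hU)
    simpa [mul_apply, ← Complex.normSq_eq_conj_mul_self, unistochastic] using this

theorem energy_diagonal_unitary_conj_diagonal (U : Matrix ι ι ℂ) (Λ q : ι → ℝ) :
    energy (diagonal fun i => (Λ i : ℂ)) (U * diagonal (fun i => (q i : ℂ)) * star U) =
      (unistochastic U *ᵥ q) ⬝ᵥ Λ := by
  have hdiag : ∀ i, (U * diagonal (fun i => (q i : ℂ)) * star U) i i =
      ((∑ j, Complex.normSq (U i j) * q j : ℝ) : ℂ) := fun i => by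
    rw [mul_apply]
    simp only [mul_diagonal, star_apply, Complex.star_def, Complex.ofReal_sum,
      Complex.ofReal_mul, Complex.normSq_eq_conj_mul_self]
    exact Finset.sum_congr rfl fun j _ => by ring
  simp only [energy, trace, diag_apply, mul_diagonal, hdiag]
  norm_cast

theorem energy_diagonal_diagonal (Λ q : ι → ℝ) :
    energy (diagonal fun i => (Λ i : ℂ)) (diagonal fun i => (q i : ℂ)) = q ⬝ᵥ Λ := by
  simp [energy, dotProduct]

theorem Antivary.dotProduct_le_mulVec_dotProduct {q Λ : ι → ℝ} (h : Antivary q Λ)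
    {B : Matrix ι ι ℝ} (hB : B ∈ doublyStochastic ℝ ι) : q ⬝ᵥ Λ ≤ (B *ᵥ q) ⬝ᵥ Λ := by
  obtain ⟨w, hw0, hw1, rfl⟩ := exists_eq_sum_perm_of_mem_doublyStochastic hB
  calc q ⬝ᵥ Λ = ∑ σ, w σ * (q ⬝ᵥ Λ) := by rw [← Finset.sum_mul, hw1, one_mul]
    _ ≤ ∑ σ, w σ * ((q ∘ σ) ⬝ᵥ Λ) := Finset.sum_le_sum fun σ _ =>
        mul_le_mul_of_nonneg_left h.sum_mul_le_sum_comp_perm_mul (hw0 σ)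
    _ = ((∑ σ, w σ • σ.permMatrix ℝ) *ᵥ q) ⬝ᵥ Λ := by
        simp [sum_mulVec, smul_mulVec, permMatrix_mulVec, sum_dotProduct, smul_dotProduct]

theorem isPassive_diagonal {q Λ : ι → ℝ} (h : Antivary q Λ) :
    IsPassive (diagonal fun i => (Λ i : ℂ)) (diagonal fun i => (q i : ℂ)) := by
  intro U hU
  rw [energy_diagonal_diagonal, energy_diagonal_unitary_conj_diagonal]
  exact h.dotProduct_le_mulVec_dotProduct (unistochastic_mem_doublyStochastic hU)

theorem Matrix.IsHermitian.exists_unitary_conj_diagonal {A : Matrix ι ι ℂ} (hA : A.IsHermitian) :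
    ∃ U ∈ unitaryGroup ι ℂ, ∃ Λ : ι → ℝ, A = U * diagonal (fun i => (Λ i : ℂ)) * star U :=
  ⟨_, hA.eigenvectorUnitary.2, _, hA.spectral_theorem⟩

theorem isPassive_gibbs {K : Matrix ι ι ℂ} (hK : K.IsHermitian) {β : ℝ} (hβ : 0 ≤ β) :
    IsPassive K (gibbs K β) := by
  obtain ⟨U, hU, Λ, rfl⟩ := hK.exists_unitary_conj_diagonal
  rw [gibbs_conj_diagonal hU]
  exact (isPassive_diagonal (antivary_gibbsWeights hβ Λ)).unitary_conj hU

end Passivity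

theorem tensPow_gibbs {d : ℕ} (n : ℕ) {H : Matrix (Fin d) (Fin d) ℂ} (hH : H.IsHermitian) (β : ℝ) :
    tensPow n (gibbs H β) = gibbs (sumHam n H) β := by
  obtain ⟨U, hU, Λ, rfl⟩ := hH.exists_unitary_conj_diagonal
  rw [gibbs_conj_diagonal hU, tensPow_conj_diagonal, sumHam_conj_diagonal hU]
  simp only [← Complex.ofReal_sum, ← Complex.ofReal_prod, ← gibbsWeights_pi_sum]
  exact (gibbs_conj_diagonal (tensPow_mem_unitaryGroup hU) β _).symm

theorem gibbs_completely_passive {d : ℕ} (H : Matrix (Fin d) (Fin d) ℂ)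
    (hH : H.IsHermitian) (β : ℝ) (hβ : 0 ≤ β) :
    ∀ n : ℕ, 1 ≤ n → IsPassive (sumHam n H) (tensPow n (gibbs H β)) := by
  intro n _
  rw [tensPow_gibbs n hH β]
  exact isPassive_gibbs (isHermitian_sumHam hH) hβ
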